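/- arXiv:1705.03837 — 3 statements merged into one kernel-verified Lean document; each statement's English description precedes it below -/
import Mathlib

section
/- Let X_1, X_2, ... be i.i.d. real-valued random variables with E[X_1] = 0, Var(X_1) = 1, and satisfying Cramér's condition. Then for any sequence (a_n) of positive reals with a_n → ∞ and a_n/√n → 0 as n → ∞, the sequence of random variables (1/(a_n √n)) Σ_{i=1}^n X_i obeys a moderate deviation principle with speed a_n² and good rate function I(x) = x²/2. -/
/-!
Moderate deviations are an instance of the Gärtner–Ellis theorem. For `Yₙ = Sₙ / (aₙ √n)` at
speed `vₙ = aₙ²`, the scaled cumulant generating function `cgf Yₙ (θ vₙ) / vₙ` equals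
`Λ(θ bₙ) / bₙ²`, where `bₙ = aₙ / √n → 0` and `Λ` is the cumulant generating function of `X₀`.
Cramér's condition makes `Λ` analytic near `0`, so `Λ(u) = u² / 2 + o(u²)` and the scaled
cumulants tend to `θ² / 2`, the cumulant generating function of a standard Gaussian.

The LDP with rate `x² / 2` follows from that limit alone. The upper bound is the Chernoff bound at
`θ = ±d`. For the lower bound near `x`, tilt by `θ = x`: comparing with the tilts by `x ± δ` shows
that the tilted mass outside the `δ`-ball is of relative size `exp(-vₙ δ² / 2)`, so at least half
of `E exp(x vₙ Yₙ)` comes from the ball.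
-/

open MeasureTheory ProbabilityTheory Filter Set

noncomputable section

/-- A family of real-valued random variables `Y` on `(Ω, μ)` indexed along a filter `l`
obeys a large deviation principle with speed `v` and good rate function `I`. -/
structure HasLDP {Ω : Type*} [MeasurableSpace Ω] (μ : Measure Ω)
    {ι : Type*} (l : Filter ι) (Y : ι → Ω → ℝ) (v : ι → ℝ) (I : ℝ → EReal) : Prop where
  nonneg : ∀ x, 0 ≤ I x
  compact_levels : ∀ L : ℝ, IsCompact {x : ℝ | I x ≤ (L : EReal)}
  lower_bound : ∀ G : Set ℝ, IsOpen G →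
    -(⨅ x ∈ G, I x) ≤
      l.liminf fun n => (((v n)⁻¹ : ℝ) : EReal) * ENNReal.log (μ {ω | Y n ω ∈ G})
  upper_bound : ∀ A : Set ℝ, IsClosed A →
    l.limsup (fun n => (((v n)⁻¹ : ℝ) : EReal) * ENNReal.log (μ {ω | Y n ω ∈ A})) ≤
      -(⨅ x ∈ A, I x)

open Real Topology Metric Asymptotics

section ExponentialScale

variable {ι : Type*} {l : Filter ι} {v : ι → ℝ}

lemma eventually_const_mul_exp_mul_le (hv : Tendsto v l atTop) (C : ℝ) {a b : ℝ} (hab : a < b) :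
    ∀ᶠ i in l, C * exp (v i * a) ≤ exp (v i * b) := by
  have hgrowth := tendsto_exp_atTop.comp (hv.atTop_mul_const (sub_pos.2 hab))
  filter_upwards [hgrowth.eventually_ge_atTop C] with i hi
  calc C * exp (v i * a) ≤ exp (v i * (b - a)) * exp (v i * a) :=
        mul_le_mul_of_nonneg_right hi (exp_pos _).le
    _ = exp (v i * b) := by rw [← exp_add]; congr 1; ring

lemma eventually_exp_mul_le_const_mul (hv : Tendsto v l atTop) {c a b : ℝ} (hc : 0 < c)
    (hab : a < b) : ∀ᶠ i in l, exp (v i * a) ≤ c * exp (v i * b) := by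
  filter_upwards [eventually_const_mul_exp_mul_le hv c⁻¹ hab] with i hi
  rwa [← inv_mul_le_iff₀ hc]

variable {Ω : Type*} [MeasurableSpace Ω] {μ : Measure Ω} [IsFiniteMeasure μ]

lemma le_inv_mul_log_measure {r w : ℝ} (hw : 0 < w) {s : Set Ω} (h : exp (w * r) ≤ μ.real s) :
    (r : EReal) ≤ ((w⁻¹ : ℝ) : EReal) * ENNReal.log (μ s) := by
  have hlog : ((w * r : ℝ) : EReal) ≤ ENNReal.log (μ s) := by
    rw [← Real.log_exp (w * r), ← ENNReal.log_ofReal_of_pos (exp_pos _)]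
    exact ENNReal.log_le_log ((ENNReal.ofReal_le_iff_le_toReal (measure_ne_top μ s)).2 h)
  calc (r : EReal) = ((w⁻¹ : ℝ) : EReal) * ((w * r : ℝ) : EReal) := by
        rw [← EReal.coe_mul, inv_mul_cancel_left₀ hw.ne']
    _ ≤ _ := mul_le_mul_of_nonneg_left hlog (EReal.coe_nonneg.2 (inv_nonneg.2 hw.le))

lemma inv_mul_log_measure_le {r w : ℝ} (hw : 0 < w) {s : Set Ω} (h : μ.real s ≤ exp (w * r)) :
    ((w⁻¹ : ℝ) : EReal) * ENNReal.log (μ s) ≤ r := by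
  have hlog : ENNReal.log (μ s) ≤ ((w * r : ℝ) : EReal) := by
    rw [← Real.log_exp (w * r), ← ENNReal.log_ofReal_of_pos (exp_pos _)]
    exact ENNReal.log_le_log
      ((ENNReal.le_ofReal_iff_toReal_le (measure_ne_top μ s) (exp_pos _).le).2 h)
  calc ((w⁻¹ : ℝ) : EReal) * ENNReal.log (μ s) ≤ ((w⁻¹ : ℝ) : EReal) * ((w * r : ℝ) : EReal) :=
        mul_le_mul_of_nonneg_left hlog (EReal.coe_nonneg.2 (inv_nonneg.2 hw.le))
    _ = r := by rw [← EReal.coe_mul, inv_mul_cancel_left₀ hw.ne']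

lemma limsup_inv_mul_log_measure_le (hv : Tendsto v l atTop) {E : ι → Set Ω} {C r : ℝ}
    (h : ∀ s > r, ∀ᶠ i in l, μ.real (E i) ≤ C * exp (v i * s)) :
    l.limsup (fun i => (((v i)⁻¹ : ℝ) : EReal) * ENNReal.log (μ (E i))) ≤ r := by
  refine EReal.le_of_forall_lt_iff_le.1 fun z hz => limsup_le_of_le (by isBoundedDefault) ?_
  have hrz : r < z := EReal.coe_lt_coe_iff.1 hz
  filter_upwards [h ((r + z) / 2) (by linarith),
    eventually_const_mul_exp_mul_le hv C (show (r + z) / 2 < z by linarith),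
    hv.eventually_gt_atTop 0] with i hE hC hvi
  exact inv_mul_log_measure_le hvi (hE.trans hC)

lemma le_liminf_inv_mul_log_measure (hv : Tendsto v l atTop) {E : ι → Set Ω} {c r : ℝ}
    (hc : 0 < c) (h : ∀ s < r, ∀ᶠ i in l, c * exp (v i * s) ≤ μ.real (E i)) :
    (r : EReal) ≤ l.liminf (fun i => (((v i)⁻¹ : ℝ) : EReal) * ENNReal.log (μ (E i))) := by
  refine EReal.ge_of_forall_gt_iff_ge.1 fun z hz => le_liminf_of_le (by isBoundedDefault) ?_
  have hzr : z < r := EReal.coe_lt_coe_iff.1 hz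
  filter_upwards [h ((z + r) / 2) (by linarith),
    eventually_exp_mul_le_const_mul hv hc (show z < (z + r) / 2 by linarith),
    hv.eventually_gt_atTop 0] with i hE hc hvi
  exact le_inv_mul_log_measure hvi (hc.trans hE)

end ExponentialScale

section Tilting

-- The tilt by `x - δ` is written `x + -δ`, as the case `σ = -δ` of `tendsto_tilted_mgf_div`.
lemma exp_mul_le_indicator_ball_add (x w y : ℝ) {δ : ℝ} (hδ : 0 ≤ δ) (hw : 0 ≤ w) :
    exp (x * w * y) ≤ exp (w * (x ^ 2 + |x| * δ)) * (ball x δ).indicator 1 y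
      + exp (-(δ * w * (x + δ))) * exp ((x + δ) * w * y)
      + exp (-(-δ * w * (x + -δ))) * exp ((x + -δ) * w * y) := by
  have tilt : ∀ σ, 0 ≤ σ * (y - x - σ) →
      exp (x * w * y) ≤ exp (-(σ * w * (x + σ))) * exp ((x + σ) * w * y) := by
    intro σ hσ
    rw [← exp_add]
    exact exp_le_exp.2 (by nlinarith [mul_nonneg hw hσ])
  have hup : 0 ≤ exp (-(δ * w * (x + δ))) * exp ((x + δ) * w * y) := by positivity
  have hdown : 0 ≤ exp (-(-δ * w * (x + -δ))) * exp ((x + -δ) * w * y) := by positivity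
  by_cases hy : y ∈ ball x δ
  · rw [indicator_of_mem hy, Pi.one_apply, mul_one]
    have hxy : x * (y - x) ≤ |x| * δ := calc
      x * (y - x) ≤ |x| * |y - x| := by rw [← abs_mul]; exact le_abs_self _
      _ ≤ |x| * δ := mul_le_mul_of_nonneg_left (mem_ball_iff_norm.1 hy).le (abs_nonneg x)
    have : exp (x * w * y) ≤ exp (w * (x ^ 2 + |x| * δ)) :=
      exp_le_exp.2 (by nlinarith [mul_le_mul_of_nonneg_left hxy hw])
    linarith
  · rw [indicator_of_notMem hy, mul_zero, zero_add]
    rw [mem_ball, Real.dist_eq, not_lt, le_abs'] at hy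
    rcases hy with hy | hy
    · linarith [tilt (-δ) (by nlinarith)]
    · linarith [tilt δ (mul_nonneg hδ (by linarith))]

variable {Ω : Type*} [MeasurableSpace Ω] {μ : Measure Ω} [IsFiniteMeasure μ]

lemma mgf_le_measureReal_ball_add {Z : Ω → ℝ} (hZ : Measurable Z) (x w : ℝ) {δ : ℝ}
    (hδ : 0 ≤ δ) (hw : 0 ≤ w) (hup : Integrable (fun ω => exp ((x + δ) * w * Z ω)) μ)
    (hdown : Integrable (fun ω => exp ((x + -δ) * w * Z ω)) μ) :
    mgf Z μ (x * w) ≤ exp (w * (x ^ 2 + |x| * δ)) * μ.real (Z ⁻¹' ball x δ)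
      + exp (-(δ * w * (x + δ))) * mgf Z μ ((x + δ) * w)
      + exp (-(-δ * w * (x + -δ))) * mgf Z μ ((x + -δ) * w) := by
  have hball : MeasurableSet (Z ⁻¹' ball x δ) := hZ measurableSet_ball
  have hind : Integrable
      (fun ω => exp (w * (x ^ 2 + |x| * δ)) * (ball x δ).indicator 1 (Z ω)) μ :=
    ((integrable_const (1 : ℝ)).indicator hball).const_mul _
  calc mgf Z μ (x * w) ≤ ∫ ω, (exp (w * (x ^ 2 + |x| * δ)) * (ball x δ).indicator 1 (Z ω)
        + exp (-(δ * w * (x + δ))) * exp ((x + δ) * w * Z ω)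
        + exp (-(-δ * w * (x + -δ))) * exp ((x + -δ) * w * Z ω)) ∂μ :=
      integral_mono_of_nonneg (ae_of_all _ fun ω => (exp_pos _).le)
        ((hind.add (hup.const_mul _)).add (hdown.const_mul _))
        (ae_of_all _ fun ω => exp_mul_le_indicator_ball_add x w (Z ω) hδ hw)
    _ = _ := by
      rw [integral_add ?_ (hdown.const_mul _), integral_add hind (hup.const_mul _),
        integral_const_mul, integral_const_mul, integral_const_mul,
        ← integral_indicator_one hball]
      · rfl
      · exact hind.add (hup.const_mul _)

end Tilting

lemma isCompact_setOf_half_sq_le (L : ℝ) :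
    IsCompact {x : ℝ | ((x ^ 2 / 2 : ℝ) : EReal) ≤ (L : EReal)} := by
  simp only [EReal.coe_le_coe_iff]
  refine (isCompact_closedBall 0 √(2 * L)).of_isClosed_subset
    (isClosed_le (by fun_prop) continuous_const) fun x hx => ?_
  rw [mem_closedBall_zero_iff, norm_eq_abs]
  exact abs_le_sqrt (by linarith [show x ^ 2 / 2 ≤ L from hx])

/-- The hypothesis of the Gärtner–Ellis theorem, with the limit `θ ↦ θ² / 2` of a standard
Gaussian. -/
structure HasGaussianScaledCgf {Ω ι : Type*} [MeasurableSpace Ω] (μ : Measure Ω) (l : Filter ι)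
    (Y : ι → Ω → ℝ) (v : ι → ℝ) : Prop where
  integrable : ∀ θ, ∀ᶠ i in l, Integrable (fun ω => exp (θ * v i * Y i ω)) μ
  tendsto : ∀ θ, Tendsto (fun i => cgf (Y i) μ (θ * v i) / v i) l (𝓝 (θ ^ 2 / 2))

namespace HasGaussianScaledCgf

variable {Ω ι : Type*} [MeasurableSpace Ω] {μ : Measure Ω} [IsProbabilityMeasure μ]
  {l : Filter ι} {Y : ι → Ω → ℝ} {v : ι → ℝ}

lemma eventually_mgf_mem_Icc (h : HasGaussianScaledCgf μ l Y v) (hv : Tendsto v l atTop)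
    (θ : ℝ) {ε : ℝ} (hε : 0 < ε) :
    ∀ᶠ i in l, mgf (Y i) μ (θ * v i) ∈
      Icc (exp (v i * (θ ^ 2 / 2 - ε))) (exp (v i * (θ ^ 2 / 2 + ε))) := by
  filter_upwards [h.integrable θ, hv.eventually_gt_atTop 0,
    (h.tendsto θ).eventually (Icc_mem_nhds (by linarith : θ ^ 2 / 2 - ε < θ ^ 2 / 2)
      (by linarith : θ ^ 2 / 2 < θ ^ 2 / 2 + ε))] with i hint hvi ⟨hlow, hhigh⟩
  rw [le_div_iff₀ hvi] at hlow
  rw [div_le_iff₀ hvi] at hhigh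
  rw [← exp_cgf hint]
  exact ⟨exp_le_exp.2 (by linarith), exp_le_exp.2 (by linarith)⟩

lemma eventually_measureReal_abs_ge_le (h : HasGaussianScaledCgf μ l Y v)
    (hv : Tendsto v l atTop) {d s : ℝ} (hd : 0 ≤ d) (hs : -(d ^ 2 / 2) < s) :
    ∀ᶠ i in l, μ.real {ω | d ≤ |Y i ω|} ≤ 2 * exp (v i * s) := by
  obtain ⟨ε, hε, rfl⟩ : ∃ ε > 0, s = -(d ^ 2 / 2) + ε := ⟨s + d ^ 2 / 2, by linarith, by ring⟩
  filter_upwards [h.integrable d, h.integrable (-d), h.eventually_mgf_mem_Icc hv d hε,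
    h.eventually_mgf_mem_Icc hv (-d) hε, hv.eventually_gt_atTop 0]
    with i hint hint' hmgf hmgf' hvi
  have hupper : μ.real {ω | d ≤ Y i ω} ≤ exp (v i * (-(d ^ 2 / 2) + ε)) := calc
    _ ≤ exp (-(d * v i) * d) * mgf (Y i) μ (d * v i) :=
      measure_ge_le_exp_mul_mgf d (by positivity) hint
    _ ≤ exp (-(d * v i) * d) * exp (v i * (d ^ 2 / 2 + ε)) := by gcongr; exact hmgf.2
    _ = exp (v i * (-(d ^ 2 / 2) + ε)) := by rw [← exp_add]; congr 1; ring
  have hlower : μ.real {ω | Y i ω ≤ -d} ≤ exp (v i * (-(d ^ 2 / 2) + ε)) := calc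
    _ ≤ exp (-(-d * v i) * -d) * mgf (Y i) μ (-d * v i) :=
      measure_le_le_exp_mul_mgf (-d) (by nlinarith) hint'
    _ ≤ exp (-(-d * v i) * -d) * exp (v i * ((-d) ^ 2 / 2 + ε)) := by gcongr; exact hmgf'.2
    _ = exp (v i * (-(d ^ 2 / 2) + ε)) := by rw [← exp_add]; congr 1; ring
  calc μ.real {ω | d ≤ |Y i ω|} ≤ μ.real ({ω | d ≤ Y i ω} ∪ {ω | Y i ω ≤ -d}) :=
        measureReal_mono fun ω hω => by
          rcases le_abs'.1 (show d ≤ |Y i ω| from hω) with hneg | hpos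
          exacts [Or.inr hneg, Or.inl hpos]
    _ ≤ μ.real {ω | d ≤ Y i ω} + μ.real {ω | Y i ω ≤ -d} := measureReal_union_le _ _
    _ ≤ 2 * exp (v i * (-(d ^ 2 / 2) + ε)) := by linarith

lemma tendsto_tilted_mgf_div (h : HasGaussianScaledCgf μ l Y v) (hv : Tendsto v l atTop)
    (x : ℝ) {σ : ℝ} (hσ : σ ≠ 0) :
    Tendsto (fun i => exp (-(σ * v i * (x + σ))) * mgf (Y i) μ ((x + σ) * v i)
      / mgf (Y i) μ (x * v i)) l (𝓝 0) := by
  have hexponent := ((h.tendsto (x + σ)).sub (h.tendsto x)).const_add (-(σ * (x + σ)))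
  rw [show -(σ * (x + σ)) + ((x + σ) ^ 2 / 2 - x ^ 2 / 2) = -(σ ^ 2 / 2) by ring] at hexponent
  refine (tendsto_exp_atBot.comp
    (hv.atTop_mul_neg (neg_neg_of_pos (by positivity)) hexponent)).congr' ?_
  filter_upwards [h.integrable (x + σ), h.integrable x, hv.eventually_gt_atTop 0]
    with i hint hint' hvi
  rw [← exp_cgf hint, ← exp_cgf hint', ← exp_add, ← exp_sub, Function.comp_apply]
  congr 1
  field_simp
  ring

lemma eventually_le_measureReal_ball (h : HasGaussianScaledCgf μ l Y v)
    (hv : Tendsto v l atTop) (hY : ∀ i, Measurable (Y i)) (x : ℝ) {δ s : ℝ} (hδ : 0 < δ)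
    (hs : s < -(x ^ 2 / 2) - |x| * δ) :
    ∀ᶠ i in l, 2⁻¹ * exp (v i * s) ≤ μ.real (Y i ⁻¹' ball x δ) := by
  obtain ⟨ε, hε, rfl⟩ : ∃ ε > 0, s = -(x ^ 2 / 2) - |x| * δ - ε :=
    ⟨-(x ^ 2 / 2) - |x| * δ - s, by linarith, by ring⟩
  have hnegligible : ∀ σ ≠ 0, ∀ᶠ i in l, exp (-(σ * v i * (x + σ))) *
      mgf (Y i) μ ((x + σ) * v i) ≤ 4⁻¹ * mgf (Y i) μ (x * v i) := by
    intro σ hσ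
    filter_upwards [(h.tendsto_tilted_mgf_div hv x hσ).eventually
      (ge_mem_nhds (by norm_num : (0 : ℝ) < 4⁻¹)), h.integrable x] with i hi hint
    rwa [div_le_iff₀ (mgf_pos hint)] at hi
  filter_upwards [hnegligible δ hδ.ne', hnegligible (-δ) (neg_ne_zero.2 hδ.ne'),
    h.integrable (x + δ), h.integrable (x + -δ), h.eventually_mgf_mem_Icc hv x hε,
    hv.eventually_gt_atTop 0] with i hup hdown hint hint' hmgf hvi
  have htilt := mgf_le_measureReal_ball_add (hY i) x (v i) hδ.le hvi.le hint hint'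
  have hcenter : exp (v i * (x ^ 2 + |x| * δ)) * exp (v i * (-(x ^ 2 / 2) - |x| * δ - ε))
      ≤ exp (v i * (x ^ 2 + |x| * δ)) * (2 * μ.real (Y i ⁻¹' ball x δ)) := calc
    _ = exp (v i * (x ^ 2 / 2 - ε)) := by rw [← exp_add]; congr 1; ring
    _ ≤ mgf (Y i) μ (x * v i) := hmgf.1
    _ ≤ _ := by linarith
  linarith [le_of_mul_le_mul_left hcenter (exp_pos _)]

lemma lower_bound (h : HasGaussianScaledCgf μ l Y v) (hv : Tendsto v l atTop)
    (hY : ∀ i, Measurable (Y i)) {G : Set ℝ} (hG : IsOpen G) :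
    -(⨅ x ∈ G, ((x ^ 2 / 2 : ℝ) : EReal)) ≤
      l.liminf fun i => (((v i)⁻¹ : ℝ) : EReal) * ENNReal.log (μ {ω | Y i ω ∈ G}) := by
  rw [EReal.neg_le]
  refine le_iInf₂ fun x hx => EReal.neg_le.1 ?_
  rw [← EReal.coe_neg]
  refine EReal.ge_of_forall_gt_iff_ge.1 fun z hz => ?_
  have hgap : 0 < -(x ^ 2 / 2) - z := sub_pos.2 (EReal.coe_lt_coe_iff.1 hz)
  obtain ⟨δ₀, hδ₀, hballG⟩ := Metric.isOpen_iff.1 hG x hx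
  set δ := min δ₀ ((-(x ^ 2 / 2) - z) / (|x| + 1))
  have hδ : 0 < δ := lt_min hδ₀ (by positivity)
  have hzδ : z < -(x ^ 2 / 2) - |x| * δ := by
    have : (|x| + 1) * δ ≤ -(x ^ 2 / 2) - z :=
      (le_div_iff₀' (by positivity)).1 (min_le_right _ _)
    linarith
  refine (EReal.coe_le_coe_iff.2 hzδ.le).trans <|
    le_liminf_inv_mul_log_measure hv (by norm_num : (0 : ℝ) < 2⁻¹) fun s hs => ?_
  filter_upwards [h.eventually_le_measureReal_ball hv hY x hδ hs] with i hi
  exact hi.trans (measureReal_mono (preimage_mono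
    ((ball_subset_ball (min_le_left _ _)).trans hballG)))

lemma upper_bound (h : HasGaussianScaledCgf μ l Y v) (hv : Tendsto v l atTop) (A : Set ℝ) :
    l.limsup (fun i => (((v i)⁻¹ : ℝ) : EReal) * ENNReal.log (μ {ω | Y i ω ∈ A})) ≤
      -(⨅ x ∈ A, ((x ^ 2 / 2 : ℝ) : EReal)) := by
  refine EReal.le_of_forall_lt_iff_le.1 fun z hz => ?_
  have hlt : ∀ x ∈ A, -z < x ^ 2 / 2 := fun x hx => EReal.coe_lt_coe_iff.1 <|
    (EReal.neg_lt_comm.1 hz).trans_le (iInf₂_le x hx)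
  set r := max (-z) 0
  have hd : ∀ x ∈ A, √(2 * r) ≤ |x| := fun x hx => by
    rw [← sqrt_sq_eq_abs]
    exact sqrt_le_sqrt (by linarith [max_le (hlt x hx).le (by positivity : 0 ≤ x ^ 2 / 2)])
  refine (limsup_inv_mul_log_measure_le hv (C := 2) (r := -(√(2 * r) ^ 2 / 2))
    fun s hs => ?_).trans (EReal.coe_le_coe_iff.2 ?_)
  · filter_upwards [h.eventually_measureReal_abs_ge_le hv (sqrt_nonneg _) hs] with i hi
    exact (measureReal_mono (show {ω | Y i ω ∈ A} ⊆ {ω | √(2 * r) ≤ |Y i ω|} from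
      fun ω hω => hd _ hω)).trans hi
  · rw [sq_sqrt (by positivity)]
    linarith [le_max_left (-z) 0]

theorem hasLDP (h : HasGaussianScaledCgf μ l Y v) (hv : Tendsto v l atTop)
    (hY : ∀ i, Measurable (Y i)) : HasLDP μ l Y v fun x => ((x ^ 2 / 2 : ℝ) : EReal) where
  nonneg x := EReal.coe_nonneg.2 (by positivity)
  compact_levels := isCompact_setOf_half_sq_le
  lower_bound _ hG := h.lower_bound hv hY hG
  upper_bound A _ := h.upper_bound hv A

end HasGaussianScaledCgf

lemma cgf_sub_taylor_two_isLittleO {Ω : Type*} [MeasurableSpace Ω] {μ : Measure Ω}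
    [IsProbabilityMeasure μ] {X : Ω → ℝ} (h0 : 0 ∈ interior (integrableExpSet X μ)) :
    (fun u => cgf X μ u - (μ[X] * u + variance X μ * u ^ 2 / 2)) =o[𝓝 0] fun u => u ^ 2 := by
  have hopen : IsOpen (interior (integrableExpSet X μ)) := isOpen_interior
  have htaylor := taylor_isLittleO (n := 2) convex_integrableExpSet.interior h0
    (analyticOnNhd_cgf.contDiffOn hopen.uniqueDiffOn)
  rw [nhdsWithin_eq_nhds.2 (hopen.mem_nhds h0)] at htaylor
  have hderiv : ∀ k, iteratedDerivWithin k (cgf X μ) (interior (integrableExpSet X μ)) 0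
      = iteratedDeriv k (cgf X μ) 0 := fun k => iteratedDerivWithin_of_isOpen hopen h0
  have hvar : variance X μ = μ[fun ω => X ω ^ 2] - μ[X] ^ 2 := by
    rw [variance_eq_sub (memLp_of_mem_interior_integrableExpSet h0 2)]
    rfl
  simp only [sub_zero] at htaylor
  refine htaylor.congr_left fun u => ?_
  simp only [taylor_within_apply, Finset.sum_range_succ, Finset.sum_range_zero, hderiv,
    iteratedDeriv_zero, iteratedDeriv_one, iteratedDeriv_two_cgf h0, deriv_cgf_zero h0, cgf_zero,
    mgf_zero, probReal_univ, zero_mul, exp_zero, mul_one, div_one, smul_eq_mul, hvar]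
  norm_num [Nat.factorial]
  ring

lemma tendsto_comp_mul_div_sq {κ : ℝ → ℝ}
    (hκ : (fun u => κ u - u ^ 2 / 2) =o[𝓝 0] fun u => u ^ 2) (θ : ℝ) :
    Tendsto (fun b => κ (θ * b) / b ^ 2) (𝓝[≠] 0) (𝓝 (θ ^ 2 / 2)) := by
  have hθb : Tendsto (fun b : ℝ => θ * b) (𝓝 0) (𝓝 0) := by
    simpa using (continuous_const_mul θ).tendsto 0
  have hrem : (fun b => κ (θ * b) - (θ * b) ^ 2 / 2) =o[𝓝 0] fun b => b ^ 2 :=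
    (hκ.comp_tendsto hθb).trans_isBigO <| by
      simpa only [Function.comp_def, mul_pow] using
        isBigO_const_mul_self (θ ^ 2) (fun b : ℝ => b ^ 2) (𝓝 0)
  have hlim := (hrem.tendsto_div_nhds_zero.mono_left
    (nhdsWithin_le_nhds (s := {0}ᶜ))).add_const (θ ^ 2 / 2)
  rw [zero_add] at hlim
  refine hlim.congr' (eventually_nhdsWithin_of_forall fun b (hb : b ≠ 0) => ?_)
  field_simp
  ring

section IID

variable {Ω : Type*} [MeasurableSpace Ω] {μ : Measure Ω} {X : ℕ → Ω → ℝ}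

lemma cgf_sum_range_div (hmeas : ∀ i, Measurable (X i)) (hindep : iIndepFun X μ)
    (hident : ∀ i, IdentDistrib (X i) (X 0) μ μ) (n : ℕ) (c t : ℝ) :
    cgf (fun ω => (∑ i ∈ Finset.range n, X i ω) / c) μ t = n * cgf (X 0) μ (t / c) := by
  have hscale : (fun ω => (∑ i ∈ Finset.range n, X i ω) / c)
      = fun ω => c⁻¹ * (∑ i ∈ Finset.range n, X i) ω := by
    ext ω; rw [Finset.sum_apply, div_eq_inv_mul]
  rw [hscale, cgf, mgf_const_mul, hindep.mgf_sum hmeas, Finset.prod_congr rfl fun i _ =>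
    mgf_congr_of_identDistrib _ _ (hident i) _, Finset.prod_const, Finset.card_range, log_pow,
    inv_mul_eq_div, cgf]

lemma integrable_exp_mul_sum_range (hmeas : ∀ i, Measurable (X i)) (hindep : iIndepFun X μ)
    (hident : ∀ i, IdentDistrib (X i) (X 0) μ μ) {t : ℝ}
    (ht : Integrable (fun ω => exp (t * X 0 ω)) μ) (n : ℕ) :
    Integrable (fun ω => exp (t * ∑ i ∈ Finset.range n, X i ω)) μ := by
  have : IsProbabilityMeasure μ := hindep.isProbabilityMeasure
  simpa only [Finset.sum_apply] using hindep.integrable_exp_mul_sum hmeas fun i _ =>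
    ((hident i).comp (measurable_const_mul t).exp).integrable_iff.2 ht

lemma hasGaussianScaledCgf_sum_div [IsProbabilityMeasure μ] (hmeas : ∀ i, Measurable (X i))
    (hindep : iIndepFun X μ) (hident : ∀ i, IdentDistrib (X i) (X 0) μ μ)
    (hmean : μ[X 0] = 0) (hvar : variance (X 0) μ = 1)
    (h0 : 0 ∈ interior (integrableExpSet (X 0) μ)) {a : ℕ → ℝ} (hatop : Tendsto a atTop atTop)
    (haslow : Tendsto (fun n => a n / √n) atTop (𝓝 0)) :
    HasGaussianScaledCgf μ atTop (fun n ω => (∑ i ∈ Finset.range n, X i ω) / (a n * √n))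
      (fun n => a n ^ 2) := by
  have hpos : ∀ᶠ n : ℕ in atTop, 0 < a n ∧ 0 < √(n : ℝ) := by
    filter_upwards [hatop.eventually_gt_atTop 0, eventually_gt_atTop 0] with n ha hn
    exact ⟨ha, sqrt_pos.2 (Nat.cast_pos.2 hn)⟩
  have hrescale : ∀ᶠ n : ℕ in atTop, ∀ θ : ℝ, θ * a n ^ 2 / (a n * √n) = θ * (a n / √n) := by
    filter_upwards [hpos] with n ⟨ha, hn⟩ θ
    field_simp
  constructor
  · intro θ
    have hsmall : ∀ᶠ n in atTop, Integrable (fun ω => exp (θ * (a n / √n) * X 0 ω)) μ := by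
      have : Tendsto (fun n => θ * (a n / √n)) atTop (𝓝 0) := by simpa using haslow.const_mul θ
      exact (this.eventually (isOpen_interior.mem_nhds h0)).mono fun n hn =>
        interior_subset (s := integrableExpSet (X 0) μ) hn
    filter_upwards [hsmall, hrescale] with n hint hscale
    convert integrable_exp_mul_sum_range hmeas hindep hident hint n using 3 with ω
    rw [← hscale]
    ring
  · intro θ
    have hκ : (fun u => cgf (X 0) μ u - u ^ 2 / 2) =o[𝓝 0] fun u => u ^ 2 := by
      simpa [hmean, hvar] using cgf_sub_taylor_two_isLittleO h0
    have hb : Tendsto (fun n => a n / √n) atTop (𝓝[≠] 0) := by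
      refine tendsto_nhdsWithin_iff.2 ⟨haslow, ?_⟩
      filter_upwards [hpos] with n ⟨ha, hn⟩
      exact (div_pos ha hn).ne'
    refine ((tendsto_comp_mul_div_sq hκ θ).comp hb).congr' ?_
    filter_upwards [hpos, hrescale] with n ⟨ha, hn⟩ hscale
    rw [Function.comp_apply, cgf_sum_range_div hmeas hindep hident, hscale, div_pow,
      sq_sqrt (Nat.cast_nonneg n)]
    field_simp

end IID

theorem mdp_iid_sums_general {Ω : Type*} [MeasurableSpace Ω] (μ : Measure Ω) [IsProbabilityMeasure μ]
    (X : ℕ → Ω → ℝ) (hmeas : ∀ i, Measurable (X i))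
    (hindep : iIndepFun X μ)
    (hident : ∀ i, IdentDistrib (X i) (X 0) μ μ)
    (hmean : μ[X 0] = 0) (hvar : variance (X 0) μ = 1)
    (hcramer : ∃ D > (0 : ℝ), ∀ l : ℝ, |l| < D → Integrable (fun ω => Real.exp (l * X 0 ω)) μ)
    (a : ℕ → ℝ) (hatop : Tendsto a atTop atTop)
    (haslow : Tendsto (fun n => a n / Real.sqrt n) atTop (nhds 0)) :
    HasLDP μ atTop
      (fun n ω => (∑ i ∈ Finset.range n, X i ω) / (a n * Real.sqrt n))
      (fun n => (a n) ^ 2)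
      (fun x => ((x ^ 2 / 2 : ℝ) : EReal)) := by
  obtain ⟨D, hD, hcramer⟩ := hcramer
  have h0 : 0 ∈ interior (integrableExpSet (X 0) μ) :=
    mem_interior_iff_mem_nhds.2 <| mem_of_superset (ball_mem_nhds 0 hD) fun t ht =>
      hcramer t (by simpa using ht)
  exact (hasGaussianScaledCgf_sum_div hmeas hindep hident hmean hvar h0 hatop haslow).hasLDP
    ((tendsto_pow_atTop two_ne_zero).comp hatop)
    fun n => (Finset.measurable_sum _ fun i _ => hmeas i).div_const _

/-- **MDP for i.i.d. sums (Theorem 2.1).** If `X₀, X₁, …` are i.i.d. centered real random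
variables with variance one satisfying Cramér's condition, and `aₙ → ∞` with `aₙ/√n → 0`,
then `(1/(aₙ√n)) ∑_{i<n} Xᵢ` obeys an MDP with speed `aₙ²` and rate `x²/2`. -/
theorem mdp_iid_sums {Ω : Type*} [MeasurableSpace Ω] (μ : Measure Ω) [IsProbabilityMeasure μ]
    (X : ℕ → Ω → ℝ) (hmeas : ∀ i, Measurable (X i))
    (hindep : iIndepFun X μ)
    (hident : ∀ i, IdentDistrib (X i) (X 0) μ μ)
    (hmean : μ[X 0] = 0) (hvar : variance (X 0) μ = 1)
    (hcramer : ∃ D > (0 : ℝ), ∀ l : ℝ, |l| < D → Integrable (fun ω => Real.exp (l * X 0 ω)) μ)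
    (a : ℕ → ℝ) (hapos : ∀ n, 0 < a n) (hatop : Tendsto a atTop atTop)
    (haslow : Tendsto (fun n => a n / Real.sqrt n) atTop (nhds 0)) :
    HasLDP μ atTop
      (fun n ω => (∑ i ∈ Finset.range n, X i ω) / (a n * Real.sqrt n))
      (fun n => (a n) ^ 2)
      (fun x => ((x ^ 2 / 2 : ℝ) : EReal)) :=
  mdp_iid_sums_general μ X hmeas hindep hident hmean hvar hcramer a hatop haslow
end
end

section
/- Let X_1, X_2, ... be i.i.d. real-valued random variables with E[X_1] = 0, Var(X_1) = 1, and satisfying Cramér's condition, and let (a_n) be a sequence of positive reals with a_n → ∞ and a_n/√n → 0 as n → ∞. Then for every t ∈ ℝ, lim_{n→∞} (1/a_n²) log E[exp( t (a_n/√n) Σ_{i=1}^n X_i )] = t²/2. -/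
/-!
By independence `E[exp(λ Sₙ)] = M(λ)ⁿ`, where `M` is the moment generating function of `X₁`, so
the quantity in question is `n Λ(λₙ) / aₙ²` with `λₙ = t aₙ / √n → 0`. Cramér's condition makes
`Λ = log M` analytic near `0`, with `Λ(0) = 0`, `Λ'(0) = E[X₁] = 0` and `Λ''(0) = Var X₁ = 1`, so
`Λ(λ) = λ²/2 + o(λ²)`. Since `n λₙ² / aₙ² = t²`, the error term is `t² · o(1)`.
-/

open MeasureTheory ProbabilityTheory Filter Set

noncomputable section

open Topology Asymptotics

theorem isLittleO_sub_taylor_two_of_hasDerivAt {E : Type*} [NormedAddCommGroup E]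
    [NormedSpace ℝ E] {f f' : ℝ → E} {f'' : E} {x₀ : ℝ}
    (hf : ∀ᶠ x in 𝓝 x₀, HasDerivAt f (f' x) x) (hf' : HasDerivAt f' f'' x₀) :
    (fun x => f x - f x₀ - (x - x₀) • f' x₀ - ((x - x₀) ^ 2 / 2) • f'')
      =o[𝓝 x₀] fun x => (x - x₀) ^ 2 := by
  obtain ⟨r, hr, hball⟩ := Metric.eventually_nhds_iff_ball.1 hf
  have hnhds : 𝓝[Metric.ball x₀ r] x₀ = 𝓝 x₀ :=
    nhdsWithin_eq_nhds.2 (Metric.ball_mem_nhds x₀ hr)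
  have hderiv : ∀ x ∈ Metric.ball x₀ r, HasDerivWithinAt
      (fun x => f x - (x - x₀) • f' x₀ - ((x - x₀) ^ 2 / 2) • f'')
      (f' x - f' x₀ - (x - x₀) • f'') (Metric.ball x₀ r) x := by
    intro x hx
    have hsq : HasDerivAt (fun x : ℝ => (x - x₀) ^ 2 / 2) (x - x₀) x :=
      ((((hasDerivAt_id' x).sub_const x₀).fun_pow 2).div_const 2).congr_deriv (by ring)
    have hlin : HasDerivAt (fun x : ℝ => x - x₀) 1 x := (hasDerivAt_id x).sub_const x₀
    exact ((((hball x hx).fun_sub (hlin.smul_const (f' x₀))).fun_sub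
      (hsq.smul_const f'')).congr_deriv (by rw [one_smul])).hasDerivWithinAt
  have hsmall : (fun x => f' x - f' x₀ - (x - x₀) • f'')
      =o[𝓝[Metric.ball x₀ r] x₀] fun x => (x - x₀) ^ 1 := by
    simpa [hnhds] using hasDerivAt_iff_isLittleO.1 hf'
  have := (convex_ball x₀ r).isLittleO_pow_succ_real (Metric.mem_ball_self hr) hderiv hsmall
  rw [hnhds] at this
  convert this using 2 with x
  simp only [sub_self, zero_smul, sub_zero, zero_pow two_ne_zero, zero_div]
  abel

section Moments

variable {Ω : Type*} [MeasurableSpace Ω] {μ : Measure Ω}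

theorem isLittleO_cgf_sub_taylor_two {X : Ω → ℝ} [IsProbabilityMeasure μ]
    (h0 : 0 ∈ interior (integrableExpSet X μ)) :
    (fun s => cgf X μ s - s * μ[X] - s ^ 2 / 2 * Var[X; μ]) =o[𝓝 0] fun s => s ^ 2 := by
  have hderiv : ∀ᶠ s in 𝓝 0, HasDerivAt (cgf X μ) (deriv (cgf X μ) s) s :=
    (isOpen_interior.eventually_mem h0).mono fun s hs =>
      (analyticAt_cgf hs).differentiableAt.hasDerivAt
  have hderiv2 : HasDerivAt (deriv (cgf X μ)) (iteratedDeriv 2 (cgf X μ) 0) 0 := by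
    rw [iteratedDeriv_succ, iteratedDeriv_one]
    exact (analyticAt_cgf h0).deriv.differentiableAt.hasDerivAt
  -- tilting `μ` by `0 * X` leaves it unchanged
  have hvar : iteratedDeriv 2 (cgf X μ) 0 = Var[X; μ] := by
    simpa using (variance_tilted_mul h0).symm
  simpa [deriv_cgf_zero h0, hvar] using isLittleO_sub_taylor_two_of_hasDerivAt hderiv hderiv2

theorem tendsto_cgf_moderate_scaling {X : Ω → ℝ} [IsProbabilityMeasure μ]
    (h0 : 0 ∈ interior (integrableExpSet X μ)) (hmean : μ[X] = 0)
    {a : ℕ → ℝ} (ha : ∀ n, a n ≠ 0) (haslow : Tendsto (fun n => a n / Real.sqrt n) atTop (𝓝 0))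
    (t : ℝ) :
    Tendsto (fun n : ℕ => 1 / a n ^ 2 * (n * cgf X μ (t * (a n / Real.sqrt n)))) atTop
      (𝓝 (t ^ 2 / 2 * Var[X; μ])) := by
  set L : ℕ → ℝ := fun n => t * (a n / Real.sqrt n)
  have hL : Tendsto L atTop (𝓝 0) := by simpa using haslow.const_mul t
  have hscale : ∀ᶠ n : ℕ in atTop, n / a n ^ 2 * L n ^ 2 = t ^ 2 := by
    filter_upwards [eventually_gt_atTop 0] with n hn
    simp only [L, mul_pow, div_pow, Real.sq_sqrt (Nat.cast_nonneg n)]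
    field_simp [ha n]
  have hrem : Tendsto
      (fun n : ℕ => n / a n ^ 2 * (cgf X μ (L n) - L n * μ[X] - L n ^ 2 / 2 * Var[X; μ]))
      atTop (𝓝 0) := by
    have hbound : (fun n : ℕ => n / a n ^ 2 * L n ^ 2) =O[atTop] fun _ => (1 : ℝ) :=
      (isBigO_const_const (t ^ 2) one_ne_zero atTop).congr' (hscale.mono fun _ h => h.symm)
        EventuallyEq.rfl
    refine (isLittleO_one_iff ℝ).1 (IsLittleO.trans_isBigO ?_ hbound)
    exact (isBigO_refl (fun n : ℕ => (n : ℝ) / a n ^ 2) atTop).mul_isLittleO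
      ((isLittleO_cgf_sub_taylor_two h0).comp_tendsto hL)
  rw [← add_zero (t ^ 2 / 2 * Var[X; μ])]
  refine (hrem.const_add (t ^ 2 / 2 * Var[X; μ])).congr' ?_
  filter_upwards [hscale] with n hn
  rw [← hn, hmean]
  ring

theorem mgf_sum_range_of_identDistrib {X : ℕ → Ω → ℝ} (hindep : iIndepFun X μ)
    (hident : ∀ i, IdentDistrib (X i) (X 0) μ μ) (n : ℕ) (t : ℝ) :
    mgf (∑ i ∈ Finset.range n, X i) μ t = mgf (X 0) μ t ^ n := by
  rw [hindep.mgf_sum₀ fun i => (hident i).aemeasurable_fst,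
    Finset.prod_congr rfl fun i _ => mgf_congr_of_identDistrib _ _ (hident i) t,
    Finset.prod_const, Finset.card_range]

end Moments

theorem limit_log_mgf_iid_sums_general {Ω : Type*} [MeasurableSpace Ω] (μ : Measure Ω)
    (X : ℕ → Ω → ℝ)
    (hindep : iIndepFun X μ)
    (hident : ∀ i, IdentDistrib (X i) (X 0) μ μ)
    (hmean : μ[X 0] = 0) (hvar : variance (X 0) μ = 1)
    (hcramer : ∃ D > (0 : ℝ), ∀ l : ℝ, |l| < D → Integrable (fun ω => Real.exp (l * X 0 ω)) μ)
    (a : ℕ → ℝ) (hapos : ∀ n, 0 < a n)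
    (haslow : Tendsto (fun n => a n / Real.sqrt n) atTop (nhds 0)) (t : ℝ) :
    Tendsto
      (fun n => (1 / (a n) ^ 2) *
        Real.log (∫ ω, Real.exp (t * (a n / Real.sqrt n) * ∑ i ∈ Finset.range n, X i ω) ∂μ))
      atTop (nhds (t ^ 2 / 2)) := by
  have : IsProbabilityMeasure μ := hindep.isProbabilityMeasure
  obtain ⟨D, hD, hexp⟩ := hcramer
  have h0 : 0 ∈ interior (integrableExpSet (X 0) μ) :=
    mem_interior_iff_mem_nhds.2 <| mem_of_superset (Metric.ball_mem_nhds 0 hD) fun l hl =>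
      hexp l (by simpa using hl)
  have hlog : ∀ n : ℕ,
      Real.log (∫ ω, Real.exp (t * (a n / Real.sqrt n) * ∑ i ∈ Finset.range n, X i ω) ∂μ)
        = n * cgf (X 0) μ (t * (a n / Real.sqrt n)) := by
    intro n
    rw [cgf, ← Real.log_pow, ← mgf_sum_range_of_identDistrib hindep hident, mgf]
    simp only [Finset.sum_apply]
  simpa only [hlog, hvar, mul_one] using
    tendsto_cgf_moderate_scaling h0 hmean (fun n => (hapos n).ne') haslow t

/-- **Logarithmic moment generating function limit for i.i.d. sums.** Under the hypotheses of
the i.i.d. MDP (centered, unit variance, Cramér's condition, `aₙ → ∞`, `aₙ/√n → 0`), for every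
`t` the normalized log-Laplace transform of `t (aₙ/√n) ∑_{i<n} Xᵢ` converges to `t²/2`. -/
theorem limit_log_mgf_iid_sums {Ω : Type*} [MeasurableSpace Ω] (μ : Measure Ω)
    [IsProbabilityMeasure μ]
    (X : ℕ → Ω → ℝ) (hmeas : ∀ i, Measurable (X i))
    (hindep : iIndepFun X μ)
    (hident : ∀ i, IdentDistrib (X i) (X 0) μ μ)
    (hmean : μ[X 0] = 0) (hvar : variance (X 0) μ = 1)
    (hcramer : ∃ D > (0 : ℝ), ∀ l : ℝ, |l| < D → Integrable (fun ω => Real.exp (l * X 0 ω)) μ)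
    (a : ℕ → ℝ) (hapos : ∀ n, 0 < a n) (hatop : Tendsto a atTop atTop)
    (haslow : Tendsto (fun n => a n / Real.sqrt n) atTop (nhds 0)) (t : ℝ) :
    Tendsto
      (fun n => (1 / (a n) ^ 2) *
        Real.log (∫ ω, Real.exp (t * (a n / Real.sqrt n) * ∑ i ∈ Finset.range n, X i ω) ∂μ))
      atTop (nhds (t ^ 2 / 2)) :=
  limit_log_mgf_iid_sums_general μ X hindep hident hmean hvar hcramer a hapos haslow t
end
end

section
/- Let X be a real-valued random variable with E[X] = 0, Var(X) = 1, and log E[exp(λ X)] < ∞ for all λ in some interval (−D, D) with D > 0, and let Z be a standard Gaussian random variable. Let (a_n) be a sequence of positive reals with a_n → ∞ and a_n/√n → 0 as n → ∞. Then for every t ∈ ℝ there exist a constant C > 0 and N ∈ ℕ such that for all n ≥ N, | E[exp(t (a_n/√n) X)] − E[exp(t (a_n/√n) Z)] | ≤ C a_n³ / n^{3/2}. -/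
/-!
A moment generating function that is finite near `0` is analytic there, with Taylor coefficients
`E[Xᵏ]/k!`. Two laws with the same mean and variance therefore have moment generating functions
agreeing up to `O(s³)` as `s → 0`; for `X` and the standard Gaussian this is evaluated along
`sₙ = t aₙ/√n → 0`, where `sₙ³ = t³ aₙ³/n^{3/2}`.
-/

open MeasureTheory ProbabilityTheory Filter Set

noncomputable section

open Asymptotics Finset
open scoped Nat Topology

namespace ProbabilityTheory

variable {Ω Ω' : Type*} {mΩ : MeasurableSpace Ω} {mΩ' : MeasurableSpace Ω'}
  {X : Ω → ℝ} {Y : Ω' → ℝ} {μ : Measure Ω} {ν : Measure Ω'}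

lemma zero_mem_interior_integrableExpSet_of_abs_lt {D : ℝ} (hD : 0 < D)
    (h : ∀ l : ℝ, |l| < D → Integrable (fun ω ↦ Real.exp (l * X ω)) μ) :
    0 ∈ interior (integrableExpSet X μ) :=
  mem_interior_iff_mem_nhds.2 <| mem_of_superset (Ioo_mem_nhds (neg_lt_zero.2 hD) hD)
    fun l hl ↦ h l (abs_lt.2 hl)

lemma mgf_sub_sum_moments_isBigO (h : 0 ∈ interior (integrableExpSet X μ)) (n : ℕ) :
    (fun s ↦ mgf X μ s - ∑ k ∈ range n, μ[X ^ k] / k ! * s ^ k)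
      =O[𝓝 0] fun s ↦ s ^ n := by
  have := (hasFPowerSeriesAt_mgf h).isBigO_sub_partialSum_pow n
  simp only [FormalMultilinearSeries.partialSum, FormalMultilinearSeries.ofScalars_apply_eq,
    smul_eq_mul, zero_add, ← norm_pow] at this
  simpa only [Pi.pow_apply, zero_mul, Real.exp_zero, mul_one] using this.of_norm_right

lemma mgf_sub_mgf_isBigO_of_moment_eq (hX : 0 ∈ interior (integrableExpSet X μ))
    (hY : 0 ∈ interior (integrableExpSet Y ν)) {n : ℕ} (h : ∀ k < n, μ[X ^ k] = ν[Y ^ k]) :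
    (fun s ↦ mgf X μ s - mgf Y ν s) =O[𝓝 0] fun s ↦ s ^ n := by
  have hpoly (s : ℝ) : ∑ k ∈ range n, μ[X ^ k] / k ! * s ^ k =
      ∑ k ∈ range n, ν[Y ^ k] / k ! * s ^ k :=
    sum_congr rfl fun k hk ↦ by rw [h k (mem_range.1 hk)]
  refine ((mgf_sub_sum_moments_isBigO hX n).sub (mgf_sub_sum_moments_isBigO hY n)).congr_left
    fun s ↦ ?_
  rw [hpoly]
  ring

lemma mgf_sub_mgf_isBigO_of_integral_eq_of_variance_eq [IsProbabilityMeasure μ]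
    [IsProbabilityMeasure ν] (hX : 0 ∈ interior (integrableExpSet X μ))
    (hY : 0 ∈ interior (integrableExpSet Y ν)) (hmean : μ[X] = ν[Y])
    (hvar : Var[X; μ] = Var[Y; ν]) :
    (fun s ↦ mgf X μ s - mgf Y ν s) =O[𝓝 0] fun s ↦ s ^ 3 := by
  refine mgf_sub_mgf_isBigO_of_moment_eq hX hY fun k hk ↦ ?_
  interval_cases k
  · simp
  · simpa using hmean
  · rw [variance_eq_sub (memLp_of_mem_interior_integrableExpSet hX 2),
      variance_eq_sub (memLp_of_mem_interior_integrableExpSet hY 2), hmean] at hvar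
    linarith

end ProbabilityTheory

lemma div_sqrt_pow_three (x : ℝ) {y : ℝ} (hy : 0 ≤ y) :
    (x / √y) ^ 3 = x ^ 3 / y ^ ((3 : ℝ) / 2) := by
  rw [div_pow, Real.sqrt_eq_rpow, ← Real.rpow_mul_natCast hy]
  norm_num

theorem lindeberg_replacement_estimate_general
    {Ω Ω' : Type*} [MeasurableSpace Ω] [MeasurableSpace Ω']
    (μ : Measure Ω) [IsProbabilityMeasure μ] (μ' : Measure Ω')
    (X : Ω → ℝ)
    (hmean : μ[X] = 0) (hvar : variance X μ = 1)
    (hcramer : ∃ D > (0 : ℝ), ∀ l : ℝ, |l| < D → Integrable (fun ω => Real.exp (l * X ω)) μ)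
    (Z : Ω' → ℝ) (hZ : Measure.map Z μ' = gaussianReal 0 1)
    (a : ℕ → ℝ) (hapos : ∀ n, 0 < a n)
    (haslow : Tendsto (fun n => a n / Real.sqrt n) atTop (nhds 0)) (t : ℝ) :
    ∃ C > (0 : ℝ), ∃ N : ℕ, ∀ n ≥ N,
      |(∫ ω, Real.exp (t * (a n / Real.sqrt n) * X ω) ∂μ) -
        ∫ ω, Real.exp (t * (a n / Real.sqrt n) * Z ω) ∂μ'| ≤
      C * (a n) ^ 3 / (n : ℝ) ^ ((3 : ℝ) / 2) := by
  obtain ⟨D, hD, hint⟩ := hcramer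
  -- `Measure.map` of a map that is not a.e.-measurable is `0`, so `hZ` makes `Z` a.e.-measurable.
  have hmgfZ : mgf id (gaussianReal 0 1) = mgf Z μ' := by
    rw [← hZ, mgf_id_map (.of_map_ne_zero (hZ ▸ IsProbabilityMeasure.ne_zero _))]
  have hlocal : (fun s ↦ mgf X μ s - mgf Z μ' s) =O[𝓝 0] fun s ↦ s ^ 3 := by
    rw [← hmgfZ]
    exact mgf_sub_mgf_isBigO_of_integral_eq_of_variance_eq
      (zero_mem_interior_integrableExpSet_of_abs_lt hD hint) (by simp) (by simpa using hmean)
      (by simpa using hvar)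
  have hscale : Tendsto (fun n : ℕ ↦ t * (a n / √n)) atTop (𝓝 0) := by
    simpa using haslow.const_mul t
  have hcube (n : ℕ) :
      (t * (a n / √n)) ^ 3 = t ^ 3 * (a n ^ 3 / (n : ℝ) ^ ((3 : ℝ) / 2)) := by
    rw [mul_pow, div_sqrt_pow_three _ n.cast_nonneg]
  have hO := ((hlocal.comp_tendsto hscale).congr_right hcube).trans (isBigO_const_mul_self _ _ _)
  obtain ⟨C, hC, hCbound⟩ := hO.exists_pos
  obtain ⟨N, hN⟩ := eventually_atTop.1 hCbound.bound
  refine ⟨C, hC, N, fun n hn ↦ ?_⟩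
  have hbound := hN n hn
  rw [Real.norm_eq_abs, Real.norm_of_nonneg (by have := hapos n; positivity)] at hbound
  simpa [mgf, mul_div_assoc] using hbound

/-- **Lindeberg replacement estimate.** If `X` is centered with unit variance and a locally
finite moment generating function, `Z` is standard Gaussian, and `aₙ → ∞` with `aₙ/√n → 0`,
then for every `t` the exponential moments of `t (aₙ/√n) X` and `t (aₙ/√n) Z` differ by at
most `C aₙ³ / n^{3/2}` for all large `n`. -/
theorem lindeberg_replacement_estimate
    {Ω Ω' : Type*} [MeasurableSpace Ω] [MeasurableSpace Ω']
    (μ : Measure Ω) [IsProbabilityMeasure μ] (μ' : Measure Ω') [IsProbabilityMeasure μ']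
    (X : Ω → ℝ) (hXmeas : Measurable X)
    (hmean : μ[X] = 0) (hvar : variance X μ = 1)
    (hcramer : ∃ D > (0 : ℝ), ∀ l : ℝ, |l| < D → Integrable (fun ω => Real.exp (l * X ω)) μ)
    (Z : Ω' → ℝ) (hZmeas : Measurable Z) (hZ : Measure.map Z μ' = gaussianReal 0 1)
    (a : ℕ → ℝ) (hapos : ∀ n, 0 < a n) (hatop : Tendsto a atTop atTop)
    (haslow : Tendsto (fun n => a n / Real.sqrt n) atTop (nhds 0)) (t : ℝ) :
    ∃ C > (0 : ℝ), ∃ N : ℕ, ∀ n ≥ N,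
      |(∫ ω, Real.exp (t * (a n / Real.sqrt n) * X ω) ∂μ) -
        ∫ ω, Real.exp (t * (a n / Real.sqrt n) * Z ω) ∂μ'| ≤
      C * (a n) ^ 3 / (n : ℝ) ^ ((3 : ℝ) / 2) :=
  lindeberg_replacement_estimate_general μ μ' X hmean hvar hcramer Z hZ a hapos haslow t
end
end
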